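/- arXiv:0707.2125 — 2 statements merged into one kernel-verified Lean document; each statement's English description precedes it below -/
import Mathlib

section
/- Let n ≥ 1. The duality map F : Bⁿ → ℂⁿ, F(z) = z/√(1 − ‖z‖²), satisfies F*ω₀ = ω₋; that is, for all z ∈ Bⁿ and all u, v ∈ ℂⁿ, ω₀(DF(z)u, DF(z)v) = ω₋(z)(u,v). -/
open Complex Set

noncomputable section

/-- The open unit ball in `ℂⁿ` (with the standard Hermitian norm). -/
def unitBall (n : ℕ) : Set (EuclideanSpace ℂ (Fin n)) := {z | ‖z‖ < 1}

/-- The standard Hermitian inner product `⟪u,v⟫ = Σⱼ conj uⱼ * vⱼ` on `ℂⁿ`. -/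
def hermInner {n : ℕ} (u v : EuclideanSpace ℂ (Fin n)) : ℂ := inner ℂ u v

/-- The flat symplectic form `ω₀(u,v) = Im ⟪u,v⟫` on `ℂⁿ`. -/
def omega0 {n : ℕ} (u v : EuclideanSpace ℂ (Fin n)) : ℝ := (hermInner u v).im

/-- The hyperbolic symplectic form on the unit ball:
`ω₋(z)(u,v) = Im (((1 - ‖z‖²)·⟪u,v⟫ + ⟪u,z⟫·⟪z,v⟫) / (1 - ‖z‖²)²)`. -/
def omegaMinus {n : ℕ} (z u v : EuclideanSpace ℂ (Fin n)) : ℝ :=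
  (((((1 : ℝ) - ‖z‖ ^ 2 : ℝ) : ℂ) * hermInner u v + hermInner u z * hermInner z v) /
    ((((1 : ℝ) - ‖z‖ ^ 2 : ℝ) : ℂ)) ^ 2).im

/-- The Bergman operator of the unit ball at `z`:
`B(z,z)v = (1 - ‖z‖²)·(v - ⟪z,v⟫·z)`. -/
def bergman {n : ℕ} (z v : EuclideanSpace ℂ (Fin n)) : EuclideanSpace ℂ (Fin n) :=
  ((((1 : ℝ) - ‖z‖ ^ 2 : ℝ) : ℂ)) • (v - hermInner z v • z)

/-- `f` is a smooth diffeomorphism of `s` onto `t`: it is `C^∞` on `s`, maps `s` to `t`,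
and has a `C^∞` inverse mapping `t` to `s`. -/
def IsSmoothDiffeoOn {E F : Type*} [NormedAddCommGroup E] [NormedSpace ℝ E]
    [NormedAddCommGroup F] [NormedSpace ℝ F] (f : E → F) (s : Set E) (t : Set F) : Prop :=
  ContDiffOn ℝ (⊤ : ℕ∞) f s ∧ Set.MapsTo f s t ∧
    ∃ g : F → E, ContDiffOn ℝ (⊤ : ℕ∞) g t ∧ Set.MapsTo g t s ∧ Set.InvOn g f s t

/-- The duality map of the unit ball: `F(z) = z / √(1 - ‖z‖²)`. -/
def dualityMap {n : ℕ} (z : EuclideanSpace ℂ (Fin n)) : EuclideanSpace ℂ (Fin n) :=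
  (Real.sqrt (1 - ‖z‖ ^ 2))⁻¹ • z

/-!
The duality map is radial, `F z = f (‖z‖²) • z` with `f r = (1 - r)^(-1/2)`, so
`DF(z) u = f u + 2 f' Re⟪z,u⟫ z`. Since `⟪z,z⟫` is real, `Im⟪DF u, DF v⟫` reduces to
`f² Im⟪u,v⟫ + 2 f f' Im(⟪u,z⟫⟪z,v⟫)`, and `f² = (1 - r)⁻¹`, `2 f f' = (1 - r)⁻²` are exactly the
two coefficients of `ω₋`.
-/

theorem hasDerivAt_inv_sqrt_one_sub {r : ℝ} (hr : r < 1) :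
    HasDerivAt (fun r : ℝ => (Real.sqrt (1 - r))⁻¹)
      ((2 * ((1 - r) * Real.sqrt (1 - r)))⁻¹) r := by
  have ht : 0 < 1 - r := sub_pos.mpr hr
  have hs : Real.sqrt (1 - r) ≠ 0 := (Real.sqrt_pos.mpr ht).ne'
  refine ((((hasDerivAt_id r).const_sub 1).sqrt ht.ne').inv hs).congr_deriv ?_
  rw [id, Real.sq_sqrt ht.le]
  field_simp

section Radial

variable {E : Type*} [NormedAddCommGroup E] [InnerProductSpace ℝ E]

theorem hasFDerivAt_norm_sq_smul {f : ℝ → ℝ} {f' : ℝ} {z : E}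
    (hf : HasDerivAt f f' (‖z‖ ^ 2)) :
    HasFDerivAt (fun x : E => f (‖x‖ ^ 2) • x)
      (f (‖z‖ ^ 2) • ContinuousLinearMap.id ℝ E + (2 * f') • (innerSL ℝ z).smulRight z) z := by
  refine ((hf.comp_hasFDerivAt z (hasStrictFDerivAt_norm_sq z).hasFDerivAt).smul
    (hasFDerivAt_id z)).congr_fderiv ?_
  ext u
  simp [smul_smul, mul_comm, mul_left_comm]

theorem fderiv_norm_sq_smul_apply {f : ℝ → ℝ} {f' : ℝ} {z : E}
    (hf : HasDerivAt f f' (‖z‖ ^ 2)) (u : E) :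
    fderiv ℝ (fun x : E => f (‖x‖ ^ 2) • x) z u =
      f (‖z‖ ^ 2) • u + (2 * f' * inner ℝ z u) • z := by
  simp [(hasFDerivAt_norm_sq_smul hf).fderiv, mul_smul]

end Radial

theorem im_inner_smul_add_re_inner_smul {E : Type*} [NormedAddCommGroup E]
    [InnerProductSpace ℂ E] (a b : ℝ) (z u v : E) :
    (inner ℂ (a • u + (b * (inner ℂ z u).re) • z) (a • v + (b * (inner ℂ z v).re) • z)).im =
      a ^ 2 * (inner ℂ u v).im + a * b * (inner ℂ u z * inner ℂ z v).im := by
  have hre : (inner ℂ u z).re = (inner ℂ z u).re := by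
    rw [← inner_conj_symm u z, Complex.conj_re]
  have hzz : (inner ℂ z z).im = 0 := inner_self_im (𝕜 := ℂ) z
  simp only [← Complex.coe_smul, inner_add_left, inner_add_right, inner_smul_left,
    inner_smul_right, Complex.conj_ofReal, Complex.add_im, Complex.mul_im, Complex.ofReal_re,
    Complex.ofReal_im, hzz, hre]
  ring

theorem EuclideanSpace.real_inner_eq_re_inner {ι : Type*} [Fintype ι]
    (x y : EuclideanSpace ℂ ι) : inner ℝ x y = (inner ℂ x y).re := by
  simp [PiLp.inner_apply, Complex.re_sum]

theorem omegaMinus_eq {n : ℕ} (z u v : EuclideanSpace ℂ (Fin n)) :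
    omegaMinus z u v = (1 - ‖z‖ ^ 2)⁻¹ * omega0 u v +
      ((1 - ‖z‖ ^ 2) ^ 2)⁻¹ * (hermInner u z * hermInner z v).im := by
  rw [omegaMinus, omega0, add_div, Complex.add_im, ← Complex.ofReal_pow, Complex.div_ofReal_im,
    Complex.div_ofReal_im, Complex.im_ofReal_mul]
  rcases eq_or_ne (1 - ‖z‖ ^ 2) 0 with ht | ht
  · simp [ht]
  · field_simp

theorem ball_dualityMap_pullback_flat_eq_hyperbolic_general (n : ℕ) :
    ∀ z ∈ unitBall n, ∀ u v : EuclideanSpace ℂ (Fin n),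
      omega0 (fderiv ℝ dualityMap z u) (fderiv ℝ dualityMap z v) = omegaMinus z u v := by
  intro z hz u v
  have hz2 : ‖z‖ ^ 2 < 1 := pow_lt_one₀ (norm_nonneg z) hz two_ne_zero
  set t := 1 - ‖z‖ ^ 2
  have ht : 0 < t := sub_pos.mpr hz2
  have hF : (dualityMap : EuclideanSpace ℂ (Fin n) → _) =
      fun x => (Real.sqrt (1 - ‖x‖ ^ 2))⁻¹ • x := rfl
  have hdF := fderiv_norm_sq_smul_apply (hasDerivAt_inv_sqrt_one_sub hz2)
  simp only [EuclideanSpace.real_inner_eq_re_inner] at hdF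
  have hsq : ((Real.sqrt t)⁻¹) ^ 2 = t⁻¹ := by rw [inv_pow, Real.sq_sqrt ht.le]
  have hmul : (Real.sqrt t)⁻¹ * (2 * (2 * (t * Real.sqrt t))⁻¹) = (t ^ 2)⁻¹ := by
    have hs0 : Real.sqrt t ≠ 0 := (Real.sqrt_pos.mpr ht).ne'
    field_simp
    rw [Real.sq_sqrt ht.le]
  rw [hF, hdF, hdF, omegaMinus_eq]
  simp only [omega0, hermInner]
  rw [im_inner_smul_add_re_inner_smul, hsq, hmul]

/-- The duality map of the unit ball pulls the flat symplectic form back to the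
hyperbolic form: `F*ω₀ = ω₋`. -/
theorem ball_dualityMap_pullback_flat_eq_hyperbolic (n : ℕ) (hn : 1 ≤ n) :
    ∀ z ∈ unitBall n, ∀ u v : EuclideanSpace ℂ (Fin n),
      omega0 (fderiv ℝ dualityMap z u) (fderiv ℝ dualityMap z v) = omegaMinus z u v :=
  ball_dualityMap_pullback_flat_eq_hyperbolic_general n
end
end

section
/- Let n ≥ 1 and let f be a smooth diffeomorphism of Bⁿ onto itself such that B(f(z),f(z))(Df(z)u) = Df(z)(B(z,z)u) for all z ∈ Bⁿ and all u ∈ ℂⁿ, where B(z,z) denotes the Bergman operator of the ball. Then ‖f(z)‖ = ‖z‖ for all z ∈ Bⁿ. -/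
/-!
For `w` in the ball, `B(w,w)` is `(1 - ‖w‖²)²` on `ℂ w` and `1 - ‖w‖²` on `w^⊥`, so these are its only
eigenvalues. As `Df(z)` is invertible, the intertwining relation makes `Df(z) z` an eigenvector of
`B(f z, f z)` with eigenvalue `a²` and `Df(z)⁻¹ (f z)` an eigenvector of `B(z,z)` with eigenvalue `b²`,
where `a = 1 - ‖z‖²` and `b = 1 - ‖f z‖²` lie in `(0, 1]`. Hence `a² ∈ {b, b²}` and `b² ∈ {a, a²}`,
which forces `a = b`: the only other option, `a² = b` and `b² = a`, gives `a⁴ = a`.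
-/

open Complex Set

noncomputable section

theorem unitBall_eq_ball (n : ℕ) : unitBall n = Metric.ball 0 1 := by
  ext z
  simp [unitBall]

theorem isOpen_unitBall (n : ℕ) : IsOpen (unitBall n) :=
  unitBall_eq_ball n ▸ Metric.isOpen_ball

theorem leftInverse_fderiv_of_eventually_eq {E F : Type*} [NormedAddCommGroup E] [NormedSpace ℝ E]
    [NormedAddCommGroup F] [NormedSpace ℝ F] {f : E → F} {g : F → E} {x : E}
    (hg : DifferentiableAt ℝ g (f x)) (hf : DifferentiableAt ℝ f x)
    (hgf : ∀ᶠ y in nhds x, g (f y) = y) :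
    Function.LeftInverse (fderiv ℝ g (f x)) (fderiv ℝ f x) := by
  have hcomp : HasFDerivAt (g ∘ f) ((fderiv ℝ g (f x)).comp (fderiv ℝ f x)) x :=
    hg.hasFDerivAt.comp x hf.hasFDerivAt
  have hid : HasFDerivAt (g ∘ f) (ContinuousLinearMap.id ℝ E) x :=
    (hasFDerivAt_id x).congr_of_eventuallyEq hgf
  exact DFunLike.congr_fun (hcomp.unique hid)

theorem IsSmoothDiffeoOn.bijective_fderiv {E F : Type*} [NormedAddCommGroup E]
    [NormedSpace ℝ E] [NormedAddCommGroup F] [NormedSpace ℝ F] {f : E → F} {s : Set E}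
    {t : Set F} (hf : IsSmoothDiffeoOn f s t) (hs : IsOpen s) (ht : IsOpen t) {x : E}
    (hx : x ∈ s) : Function.Bijective (fderiv ℝ f x) := by
  obtain ⟨hf_smooth, hf_maps, g, hg_smooth, -, hgf, hfg⟩ := hf
  have hfx : f x ∈ t := hf_maps hx
  have hf_diff : ∀ y ∈ s, DifferentiableAt ℝ f y := fun y hy =>
    (hf_smooth.differentiableOn (by simp)).differentiableAt (hs.mem_nhds hy)
  have hg_diff : DifferentiableAt ℝ g (f x) :=
    (hg_smooth.differentiableOn (by simp)).differentiableAt (ht.mem_nhds hfx)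
  have hgfx : g (f x) = x := hgf hx
  have hleft := leftInverse_fderiv_of_eventually_eq hg_diff (hf_diff x hx)
    (Filter.eventually_of_mem (hs.mem_nhds hx) hgf)
  have hf_diff' : DifferentiableAt ℝ f (g (f x)) := hgfx.symm ▸ hf_diff x hx
  have hright := leftInverse_fderiv_of_eventually_eq hf_diff' hg_diff
    (Filter.eventually_of_mem (ht.mem_nhds hfx) hfg)
  rw [hgfx] at hright
  exact ⟨hleft.injective, hright.surjective⟩

theorem hermInner_self {n : ℕ} (z : EuclideanSpace ℂ (Fin n)) :
    hermInner z z = ((‖z‖ ^ 2 : ℝ) : ℂ) := by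
  rw [hermInner, inner_self_eq_norm_sq_to_K]
  norm_cast

theorem bergman_self {n : ℕ} (z : EuclideanSpace ℂ (Fin n)) :
    bergman z z = ((1 - ‖z‖ ^ 2) ^ 2 : ℝ) • z := by
  rw [bergman, hermInner_self, ← Complex.coe_smul, smul_sub, smul_smul, ← sub_smul]
  congr 1
  push_cast
  ring

theorem hermInner_bergman {n : ℕ} (w x : EuclideanSpace ℂ (Fin n)) :
    hermInner w (bergman w x) = (((1 - ‖w‖ ^ 2) ^ 2 : ℝ) : ℂ) * hermInner w x := by
  have hww : inner ℂ w w = ((‖w‖ ^ 2 : ℝ) : ℂ) := hermInner_self w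
  simp only [bergman, hermInner, inner_smul_right, inner_sub_right, hww]
  push_cast
  ring

theorem eq_or_eq_sq_of_bergman_eq_smul {n : ℕ} {w x : EuclideanSpace ℂ (Fin n)} {μ : ℝ}
    (hx : x ≠ 0) (h : bergman w x = μ • x) :
    μ = 1 - ‖w‖ ^ 2 ∨ μ = (1 - ‖w‖ ^ 2) ^ 2 := by
  have hμ : (μ : ℂ) * hermInner w x = (((1 - ‖w‖ ^ 2) ^ 2 : ℝ) : ℂ) * hermInner w x := by
    rw [← hermInner_bergman, h, ← Complex.coe_smul, hermInner, hermInner, inner_smul_right]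
  rcases mul_eq_mul_right_iff.mp hμ with hμ | horth
  · exact Or.inr (mod_cast hμ)
  · left
    have hsmul : bergman w x = (1 - ‖w‖ ^ 2 : ℝ) • x := by
      rw [bergman, horth, zero_smul, sub_zero, Complex.coe_smul]
    exact smul_left_injective ℝ hx (h.symm.trans hsmul)

theorem eq_of_sq_eq_or_sq_eq_sq {a b : ℝ} (ha : 0 < a) (ha₁ : a ≤ 1) (hb : 0 < b) (hb₁ : b ≤ 1)
    (hab : a < 1 → a ^ 2 = b ∨ a ^ 2 = b ^ 2) (hba : b < 1 → b ^ 2 = a ∨ b ^ 2 = a ^ 2) :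
    a = b := by
  rcases ha₁.lt_or_eq with ha₁ | rfl <;> rcases hb₁.lt_or_eq with hb₁ | rfl
  · rcases hab ha₁ with h | h
    · rcases hba hb₁ with h' | h'
      · nlinarith [mul_pos ha ha]
      · nlinarith
    · nlinarith
  · rcases hab ha₁ with h | h <;> nlinarith
  · rcases hba hb₁ with h | h <;> nlinarith
  · rfl

theorem norm_preserving_of_bergman_intertwining_general (n : ℕ)
    (f : EuclideanSpace ℂ (Fin n) → EuclideanSpace ℂ (Fin n))
    (hf : IsSmoothDiffeoOn f (unitBall n) (unitBall n))
    (hB : ∀ z ∈ unitBall n, ∀ u : EuclideanSpace ℂ (Fin n),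
      bergman (f z) (fderiv ℝ f z u) = fderiv ℝ f z (bergman z u)) :
    ∀ z ∈ unitBall n, ‖f z‖ = ‖z‖ := by
  intro z hz
  have hfz : ‖f z‖ < 1 := hf.2.1 hz
  have hz' : ‖z‖ < 1 := hz
  obtain ⟨hA_inj, hA_surj⟩ := hf.bijective_fderiv (isOpen_unitBall n) (isOpen_unitBall n) hz
  have h_eigen_fz : z ≠ 0 → (1 - ‖z‖ ^ 2) ^ 2 = 1 - ‖f z‖ ^ 2 ∨
      (1 - ‖z‖ ^ 2) ^ 2 = (1 - ‖f z‖ ^ 2) ^ 2 := fun hz0 =>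
    eq_or_eq_sq_of_bergman_eq_smul ((map_ne_zero_iff _ hA_inj).mpr hz0)
      (by rw [hB z hz, bergman_self, map_smul])
  have h_eigen_z : f z ≠ 0 → (1 - ‖f z‖ ^ 2) ^ 2 = 1 - ‖z‖ ^ 2 ∨
      (1 - ‖f z‖ ^ 2) ^ 2 = (1 - ‖z‖ ^ 2) ^ 2 := by
    intro hfz0
    obtain ⟨x, hx⟩ := hA_surj (f z)
    have hx0 : x ≠ 0 := by
      rintro rfl
      exact hfz0 (by rw [← hx, map_zero])
    refine eq_or_eq_sq_of_bergman_eq_smul hx0 (hA_inj ?_)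
    rw [← hB z hz, hx, bergman_self, map_smul, hx]
  have h_sq : 1 - ‖z‖ ^ 2 = 1 - ‖f z‖ ^ 2 := by
    refine eq_of_sq_eq_or_sq_eq_sq (by nlinarith [norm_nonneg z]) (by nlinarith)
      (by nlinarith [norm_nonneg (f z)]) (by nlinarith) (fun h => h_eigen_fz ?_)
      (fun h => h_eigen_z ?_)
    · rintro rfl; simp at h
    · intro h0; simp [h0] at h
  exact (pow_left_inj₀ (norm_nonneg _) (norm_nonneg _) two_ne_zero).mp (by linarith)

/-- A smooth diffeomorphism of the unit ball whose differential intertwines the Bergman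
operators preserves the norm of every point. -/
theorem norm_preserving_of_bergman_intertwining (n : ℕ) (hn : 1 ≤ n)
    (f : EuclideanSpace ℂ (Fin n) → EuclideanSpace ℂ (Fin n))
    (hf : IsSmoothDiffeoOn f (unitBall n) (unitBall n))
    (hB : ∀ z ∈ unitBall n, ∀ u : EuclideanSpace ℂ (Fin n),
      bergman (f z) (fderiv ℝ f z u) = fderiv ℝ f z (bergman z u)) :
    ∀ z ∈ unitBall n, ‖f z‖ = ‖z‖ :=
  norm_preserving_of_bergman_intertwining_general n f hf hB
end
end
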